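/- arXiv:1806.07587 — 3 statements merged into one kernel-verified Lean document; each statement's English description precedes it below -/
import Mathlib

section
/- Let r ∈ {1, 3} and let a be a positive integer with r·a ≥ 3. Suppose x, y, z are rational numbers satisfying the three equations: (r⁴a³ − 3r³a² + 3r²a − r)·x − (3r²a³ − 6ra² + 3a)·y + a³·z = 2, (r³a⁴ − 4r²a³ + 6ra² − 4a)·x + (4a³ − 2ra⁴)·y = 0, and x − (r²a⁴ − 4ra³ + 6a²)·y + a⁴·z = 0. Then x = 4a/(ra − 2)², y = (2r²a² − 4ra + 4)/(a(ra − 2)²), and z = (2r⁴a⁴ − 12r³a³ + 32r²a² − 40ra + 20)/(a³(ra − 2)²). -/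
/-!
Put `t = r a`. Divided by `a (t - 2)`, the second equation says `(t² - 2t + 2) x = 2 a² y`.
Eliminating `z` between `a` times the first equation and the third one, and then `y` by this
relation, every term cancels except `(t - 2)² x = 4 a`. This gives `x`, then `y`, and the third
equation gives `z`.
-/

section QuadricBundleSystem

variable {K : Type*} [Field K] {r a x y z : K}

theorem xy_relation_of_second_eqn (ha : a ≠ 0) (hra : r * a ≠ 2)
    (h2 : (r ^ 3 * a ^ 4 - 4 * r ^ 2 * a ^ 3 + 6 * r * a ^ 2 - 4 * a) * x
        + (4 * a ^ 3 - 2 * r * a ^ 4) * y = 0) :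
    ((r * a) ^ 2 - 2 * (r * a) + 2) * x = 2 * a ^ 2 * y := by
  apply mul_left_cancel₀ (mul_ne_zero ha (sub_ne_zero.mpr hra))
  linear_combination h2

theorem sub_two_sq_mul_x_of_first_third_eqn
    (h1 : (r ^ 4 * a ^ 3 - 3 * r ^ 3 * a ^ 2 + 3 * r ^ 2 * a - r) * x
        - (3 * r ^ 2 * a ^ 3 - 6 * r * a ^ 2 + 3 * a) * y + a ^ 3 * z = 2)
    (h3 : x - (r ^ 2 * a ^ 4 - 4 * r * a ^ 3 + 6 * a ^ 2) * y + a ^ 4 * z = 0)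
    (hxy : ((r * a) ^ 2 - 2 * (r * a) + 2) * x = 2 * a ^ 2 * y) :
    (r * a - 2) ^ 2 * x = 4 * a := by
  linear_combination 2 * a * h1 - 2 * h3 - (2 * (r * a) ^ 2 - 2 * (r * a) - 3) * hxy

theorem solve_quadricBundle_system [NeZero (2 : K)] (ha : a ≠ 0) (hra : r * a ≠ 2)
    (h1 : (r ^ 4 * a ^ 3 - 3 * r ^ 3 * a ^ 2 + 3 * r ^ 2 * a - r) * x
        - (3 * r ^ 2 * a ^ 3 - 6 * r * a ^ 2 + 3 * a) * y + a ^ 3 * z = 2)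
    (h2 : (r ^ 3 * a ^ 4 - 4 * r ^ 2 * a ^ 3 + 6 * r * a ^ 2 - 4 * a) * x
        + (4 * a ^ 3 - 2 * r * a ^ 4) * y = 0)
    (h3 : x - (r ^ 2 * a ^ 4 - 4 * r * a ^ 3 + 6 * a ^ 2) * y + a ^ 4 * z = 0) :
    x = 4 * a / (r * a - 2) ^ 2 ∧
    y = (2 * r ^ 2 * a ^ 2 - 4 * r * a + 4) / (a * (r * a - 2) ^ 2) ∧
    z = (2 * r ^ 4 * a ^ 4 - 12 * r ^ 3 * a ^ 3 + 32 * r ^ 2 * a ^ 2 - 40 * r * a + 20) /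
        (a ^ 3 * (r * a - 2) ^ 2) := by
  have hxy := xy_relation_of_second_eqn ha hra h2
  have hx := sub_two_sq_mul_x_of_first_third_eqn h1 h3 hxy
  have hd : r * a - 2 ≠ 0 := sub_ne_zero.mpr hra
  have hy : a * (r * a - 2) ^ 2 * y = 2 * ((r * a) ^ 2 - 2 * (r * a) + 2) := by
    apply mul_left_cancel₀ (mul_ne_zero two_ne_zero ha)
    linear_combination -(r * a - 2) ^ 2 * hxy + ((r * a) ^ 2 - 2 * (r * a) + 2) * hx
  have hz : a ^ 3 * (r * a - 2) ^ 2 * z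
      = 2 * r ^ 4 * a ^ 4 - 12 * r ^ 3 * a ^ 3 + 32 * r ^ 2 * a ^ 2 - 40 * r * a + 20 := by
    apply mul_left_cancel₀ ha
    linear_combination (r * a - 2) ^ 2 * h3 + a * ((r * a) ^ 2 - 4 * (r * a) + 6) * hy - hx
  refine ⟨?_, ?_, ?_⟩
  · rw [eq_div_iff (pow_ne_zero 2 hd)]
    linear_combination hx
  · rw [eq_div_iff (mul_ne_zero ha (pow_ne_zero 2 hd))]
    linear_combination hy
  · rw [eq_div_iff (mul_ne_zero (pow_ne_zero 3 ha) (pow_ne_zero 2 hd))]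
    linear_combination hz

end QuadricBundleSystem

theorem stmt_3_general (r a : ℤ) (ha : 0 < a) (hra : 3 ≤ r * a)
    (x y z : ℚ)
    (h1 : ((r : ℚ) ^ 4 * (a : ℚ) ^ 3 - 3 * (r : ℚ) ^ 3 * (a : ℚ) ^ 2
        + 3 * (r : ℚ) ^ 2 * (a : ℚ) - (r : ℚ)) * x
        - (3 * (r : ℚ) ^ 2 * (a : ℚ) ^ 3 - 6 * (r : ℚ) * (a : ℚ) ^ 2 + 3 * (a : ℚ)) * y
        + (a : ℚ) ^ 3 * z = 2)
    (h2 : ((r : ℚ) ^ 3 * (a : ℚ) ^ 4 - 4 * (r : ℚ) ^ 2 * (a : ℚ) ^ 3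
        + 6 * (r : ℚ) * (a : ℚ) ^ 2 - 4 * (a : ℚ)) * x
        + (4 * (a : ℚ) ^ 3 - 2 * (r : ℚ) * (a : ℚ) ^ 4) * y = 0)
    (h3 : x - ((r : ℚ) ^ 2 * (a : ℚ) ^ 4 - 4 * (r : ℚ) * (a : ℚ) ^ 3
        + 6 * (a : ℚ) ^ 2) * y + (a : ℚ) ^ 4 * z = 0) :
    x = 4 * (a : ℚ) / ((r : ℚ) * (a : ℚ) - 2) ^ 2 ∧
    y = (2 * (r : ℚ) ^ 2 * (a : ℚ) ^ 2 - 4 * (r : ℚ) * (a : ℚ) + 4) /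
        ((a : ℚ) * ((r : ℚ) * (a : ℚ) - 2) ^ 2) ∧
    z = (2 * (r : ℚ) ^ 4 * (a : ℚ) ^ 4 - 12 * (r : ℚ) ^ 3 * (a : ℚ) ^ 3
        + 32 * (r : ℚ) ^ 2 * (a : ℚ) ^ 2 - 40 * (r : ℚ) * (a : ℚ) + 20) /
        ((a : ℚ) ^ 3 * ((r : ℚ) * (a : ℚ) - 2) ^ 2) := by
  have ha' : (a : ℚ) ≠ 0 := by exact_mod_cast ha.ne'
  have hra' : (r : ℚ) * a ≠ 2 := by exact_mod_cast (by omega : r * a ≠ 2)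
  exact solve_quadricBundle_system ha' hra' h1 h2 h3

/-- Solution of the linear system in the quadric bundle case (Section 5). -/
theorem stmt_3 (r a : ℤ) (hr : r = 1 ∨ r = 3) (ha : 0 < a) (hra : 3 ≤ r * a)
    (x y z : ℚ)
    (h1 : ((r : ℚ) ^ 4 * (a : ℚ) ^ 3 - 3 * (r : ℚ) ^ 3 * (a : ℚ) ^ 2
        + 3 * (r : ℚ) ^ 2 * (a : ℚ) - (r : ℚ)) * x
        - (3 * (r : ℚ) ^ 2 * (a : ℚ) ^ 3 - 6 * (r : ℚ) * (a : ℚ) ^ 2 + 3 * (a : ℚ)) * y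
        + (a : ℚ) ^ 3 * z = 2)
    (h2 : ((r : ℚ) ^ 3 * (a : ℚ) ^ 4 - 4 * (r : ℚ) ^ 2 * (a : ℚ) ^ 3
        + 6 * (r : ℚ) * (a : ℚ) ^ 2 - 4 * (a : ℚ)) * x
        + (4 * (a : ℚ) ^ 3 - 2 * (r : ℚ) * (a : ℚ) ^ 4) * y = 0)
    (h3 : x - ((r : ℚ) ^ 2 * (a : ℚ) ^ 4 - 4 * (r : ℚ) * (a : ℚ) ^ 3
        + 6 * (a : ℚ) ^ 2) * y + (a : ℚ) ^ 4 * z = 0) :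
    x = 4 * (a : ℚ) / ((r : ℚ) * (a : ℚ) - 2) ^ 2 ∧
    y = (2 * (r : ℚ) ^ 2 * (a : ℚ) ^ 2 - 4 * (r : ℚ) * (a : ℚ) + 4) /
        ((a : ℚ) * ((r : ℚ) * (a : ℚ) - 2) ^ 2) ∧
    z = (2 * (r : ℚ) ^ 4 * (a : ℚ) ^ 4 - 12 * (r : ℚ) ^ 3 * (a : ℚ) ^ 3
        + 32 * (r : ℚ) ^ 2 * (a : ℚ) ^ 2 - 40 * (r : ℚ) * (a : ℚ) + 20) /
        ((a : ℚ) ^ 3 * ((r : ℚ) * (a : ℚ) - 2) ^ 2) :=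
  stmt_3_general r a ha hra x y z h1 h2 h3
end

section
/- Set a = 3 and r = 1. Then there do not exist rational numbers x, y, z, u, v satisfying f₁ = 0, f₂ = 1/24, f₃ = 5/12, f₄ = 35/24 and f₅ = 25/12, where f₁ = ((a⁵r⁴ − 5a⁴r³ + 10a³r² − 10a²r + 5a)x − (3a⁵r² − 10a⁴r + 10a³)y + a⁵z)/120, f₂ = ((a⁴r⁴ − 4a³r³ + 6a²r² − 4ar + 1)x − (3a⁴r² − 8a³r + 6a²)y + a⁴z)/24, f₃ = (5a³r⁴ − 15a²r³ + 15ar² − 6r)x/72 − (5a³r² − 10a²r + 4a)y/24 + a³z/18 + (a³r² − 3a²r + 3a)u/72 − a³v/72, f₄ = ((a²r⁴ − 2ar³ + r²)x − (3a²r² − 4ar)y + (a²r² − 2ar + 1)u − a²v)/24, and f₅ = ar⁴x/180 − ar²y/60 − az/45 + (2ar² − 3r)u/72 − av/36 + a. -/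
/-!
Write `χ(m)` for the polynomial `f₁ m⁵ + f₂ m⁴ + f₃ m³ + f₄ m² + f₅ m + 1`, the Euler characteristic
`χ(m(aξ − π*H_X))` on `W = ℙ(E)`. This polynomial always vanishes at `m = −1/a`: the alternating
combination `f₁ − a f₂ + a² f₃ − a³ f₄ + a⁴ f₅` is identically `a⁵`. The prescribed values say
`χ(m) = (m + 1)(m + 2)(m + 3)(m + 4)/24`, whose roots are `−1, −2, −3, −4`, so
`a ∈ {1, 1/2, 1/3, 1/4}`; in particular `a = 3` is impossible.
-/

namespace FanoRankTwoBundle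

variable {K : Type*} [Field K]

def f₁ (a r x y z : K) : K :=
  ((a ^ 5 * r ^ 4 - 5 * a ^ 4 * r ^ 3 + 10 * a ^ 3 * r ^ 2 - 10 * a ^ 2 * r + 5 * a) * x
    - (3 * a ^ 5 * r ^ 2 - 10 * a ^ 4 * r + 10 * a ^ 3) * y + a ^ 5 * z) / 120

def f₂ (a r x y z : K) : K :=
  ((a ^ 4 * r ^ 4 - 4 * a ^ 3 * r ^ 3 + 6 * a ^ 2 * r ^ 2 - 4 * a * r + 1) * x
    - (3 * a ^ 4 * r ^ 2 - 8 * a ^ 3 * r + 6 * a ^ 2) * y + a ^ 4 * z) / 24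

def f₃ (a r x y z u v : K) : K :=
  (5 * a ^ 3 * r ^ 4 - 15 * a ^ 2 * r ^ 3 + 15 * a * r ^ 2 - 6 * r) * x / 72
    - (5 * a ^ 3 * r ^ 2 - 10 * a ^ 2 * r + 4 * a) * y / 24 + a ^ 3 * z / 18
    + (a ^ 3 * r ^ 2 - 3 * a ^ 2 * r + 3 * a) * u / 72 - a ^ 3 * v / 72

def f₄ (a r x y u v : K) : K :=
  ((a ^ 2 * r ^ 4 - 2 * a * r ^ 3 + r ^ 2) * x - (3 * a ^ 2 * r ^ 2 - 4 * a * r) * y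
    + (a ^ 2 * r ^ 2 - 2 * a * r + 1) * u - a ^ 2 * v) / 24

def f₅ (a r x y z u v : K) : K :=
  a * r ^ 4 * x / 180 - a * r ^ 2 * y / 60 - a * z / 45
    + (2 * a * r ^ 2 - 3 * r) * u / 72 - a * v / 36 + a

def eulerChar (a r x y z u v m : K) : K :=
  f₁ a r x y z * m ^ 5 + f₂ a r x y z * m ^ 4 + f₃ a r x y z u v * m ^ 3
    + f₄ a r x y u v * m ^ 2 + f₅ a r x y z u v * m + 1

variable [CharZero K] (a r x y z u v : K)

theorem f₁_sub_mul_f₂_add_mul_f₃_sub_mul_f₄_add_mul_f₅ :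
    f₁ a r x y z - a * f₂ a r x y z + a ^ 2 * f₃ a r x y z u v - a ^ 3 * f₄ a r x y u v
      + a ^ 4 * f₅ a r x y z u v = a ^ 5 := by
  unfold f₁ f₂ f₃ f₄ f₅
  ring

theorem eulerChar_neg_inv {a : K} (ha : a ≠ 0) :
    eulerChar a r x y z u v (-a⁻¹) = 0 := by
  have key := f₁_sub_mul_f₂_add_mul_f₃_sub_mul_f₄_add_mul_f₅ a r x y z u v
  unfold eulerChar
  field_simp
  linear_combination -key

variable {a r x y z u v}

theorem eulerChar_eq_of_coeffs (h₁ : f₁ a r x y z = 0) (h₂ : f₂ a r x y z = 1 / 24)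
    (h₃ : f₃ a r x y z u v = 5 / 12) (h₄ : f₄ a r x y u v = 35 / 24)
    (h₅ : f₅ a r x y z u v = 25 / 12) (m : K) :
    eulerChar a r x y z u v m = (m + 1) * (m + 2) * (m + 3) * (m + 4) / 24 := by
  rw [eulerChar, h₁, h₂, h₃, h₄, h₅]
  ring

end FanoRankTwoBundle

open FanoRankTwoBundle in
theorem stmt_7_general (a r : ℚ) (ha : a = 3) :
    ¬ ∃ x y z u v : ℚ,
      ((a ^ 5 * r ^ 4 - 5 * a ^ 4 * r ^ 3 + 10 * a ^ 3 * r ^ 2 - 10 * a ^ 2 * r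
          + 5 * a) * x - (3 * a ^ 5 * r ^ 2 - 10 * a ^ 4 * r + 10 * a ^ 3) * y
          + a ^ 5 * z) / 120 = 0 ∧
      ((a ^ 4 * r ^ 4 - 4 * a ^ 3 * r ^ 3 + 6 * a ^ 2 * r ^ 2 - 4 * a * r + 1) * x
          - (3 * a ^ 4 * r ^ 2 - 8 * a ^ 3 * r + 6 * a ^ 2) * y
          + a ^ 4 * z) / 24 = 1 / 24 ∧
      (5 * a ^ 3 * r ^ 4 - 15 * a ^ 2 * r ^ 3 + 15 * a * r ^ 2 - 6 * r) * x / 72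
          - (5 * a ^ 3 * r ^ 2 - 10 * a ^ 2 * r + 4 * a) * y / 24
          + a ^ 3 * z / 18
          + (a ^ 3 * r ^ 2 - 3 * a ^ 2 * r + 3 * a) * u / 72
          - a ^ 3 * v / 72 = 5 / 12 ∧
      ((a ^ 2 * r ^ 4 - 2 * a * r ^ 3 + r ^ 2) * x
          - (3 * a ^ 2 * r ^ 2 - 4 * a * r) * y
          + (a ^ 2 * r ^ 2 - 2 * a * r + 1) * u - a ^ 2 * v) / 24 = 35 / 24 ∧
      a * r ^ 4 * x / 180 - a * r ^ 2 * y / 60 - a * z / 45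
          + (2 * a * r ^ 2 - 3 * r) * u / 72 - a * v / 36 + a = 25 / 12 := by
  rintro ⟨x, y, z, u, v, h₁, h₂, h₃, h₄, h₅⟩
  have hroot := eulerChar_neg_inv r x y z u v (a := a) (by norm_num [ha])
  rw [eulerChar_eq_of_coeffs h₁ h₂ h₃ h₄ h₅, ha] at hroot
  norm_num at hroot

/-- Half of Proposition 6.11: no solution for (a, r) = (3, 1). -/
theorem stmt_7 (a r : ℚ) (ha : a = 3) (hr : r = 1) :
    ¬ ∃ x y z u v : ℚ,
      ((a ^ 5 * r ^ 4 - 5 * a ^ 4 * r ^ 3 + 10 * a ^ 3 * r ^ 2 - 10 * a ^ 2 * r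
          + 5 * a) * x - (3 * a ^ 5 * r ^ 2 - 10 * a ^ 4 * r + 10 * a ^ 3) * y
          + a ^ 5 * z) / 120 = 0 ∧
      ((a ^ 4 * r ^ 4 - 4 * a ^ 3 * r ^ 3 + 6 * a ^ 2 * r ^ 2 - 4 * a * r + 1) * x
          - (3 * a ^ 4 * r ^ 2 - 8 * a ^ 3 * r + 6 * a ^ 2) * y
          + a ^ 4 * z) / 24 = 1 / 24 ∧
      (5 * a ^ 3 * r ^ 4 - 15 * a ^ 2 * r ^ 3 + 15 * a * r ^ 2 - 6 * r) * x / 72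
          - (5 * a ^ 3 * r ^ 2 - 10 * a ^ 2 * r + 4 * a) * y / 24
          + a ^ 3 * z / 18
          + (a ^ 3 * r ^ 2 - 3 * a ^ 2 * r + 3 * a) * u / 72
          - a ^ 3 * v / 72 = 5 / 12 ∧
      ((a ^ 2 * r ^ 4 - 2 * a * r ^ 3 + r ^ 2) * x
          - (3 * a ^ 2 * r ^ 2 - 4 * a * r) * y
          + (a ^ 2 * r ^ 2 - 2 * a * r + 1) * u - a ^ 2 * v) / 24 = 35 / 24 ∧
      a * r ^ 4 * x / 180 - a * r ^ 2 * y / 60 - a * z / 45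
          + (2 * a * r ^ 2 - 3 * r) * u / 72 - a * v / 36 + a = 25 / 12 :=
  stmt_7_general a r ha
end

section
/- Set a = 1 and r = 3. Then rational numbers x, y, z, u, v satisfy f₁ = 0, f₂ = 1/24, f₃ = 5/12, f₄ = 35/24 and f₅ = 25/12 if and only if y = (5x − 1)/2, z = (13x − 7)/2, u = 2x + 12, and v = (13x + 41)/2, where f₁ = ((a⁵r⁴ − 5a⁴r³ + 10a³r² − 10a²r + 5a)x − (3a⁵r² − 10a⁴r + 10a³)y + a⁵z)/120, f₂ = ((a⁴r⁴ − 4a³r³ + 6a²r² − 4ar + 1)x − (3a⁴r² − 8a³r + 6a²)y + a⁴z)/24, f₃ = (5a³r⁴ − 15a²r³ + 15ar² − 6r)x/72 − (5a³r² − 10a²r + 4a)y/24 + a³z/18 + (a³r² − 3a²r + 3a)u/72 − a³v/72, f₄ = ((a²r⁴ − 2ar³ + r²)x − (3a²r² − 4ar)y + (a²r² − 2ar + 1)u − a²v)/24, and f₅ = ar⁴x/180 − ar²y/60 − az/45 + (2ar² − 3r)u/72 − av/36 + a. -/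
/-- Half of Proposition 6.11: solving the linear system for (a, r) = (1, 3). -/
theorem stmt_8 (a r : ℚ) (ha : a = 1) (hr : r = 3) (x y z u v : ℚ) :
    (((a ^ 5 * r ^ 4 - 5 * a ^ 4 * r ^ 3 + 10 * a ^ 3 * r ^ 2 - 10 * a ^ 2 * r
          + 5 * a) * x - (3 * a ^ 5 * r ^ 2 - 10 * a ^ 4 * r + 10 * a ^ 3) * y
          + a ^ 5 * z) / 120 = 0 ∧
      ((a ^ 4 * r ^ 4 - 4 * a ^ 3 * r ^ 3 + 6 * a ^ 2 * r ^ 2 - 4 * a * r + 1) * x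
          - (3 * a ^ 4 * r ^ 2 - 8 * a ^ 3 * r + 6 * a ^ 2) * y
          + a ^ 4 * z) / 24 = 1 / 24 ∧
      (5 * a ^ 3 * r ^ 4 - 15 * a ^ 2 * r ^ 3 + 15 * a * r ^ 2 - 6 * r) * x / 72
          - (5 * a ^ 3 * r ^ 2 - 10 * a ^ 2 * r + 4 * a) * y / 24
          + a ^ 3 * z / 18
          + (a ^ 3 * r ^ 2 - 3 * a ^ 2 * r + 3 * a) * u / 72
          - a ^ 3 * v / 72 = 5 / 12 ∧
      ((a ^ 2 * r ^ 4 - 2 * a * r ^ 3 + r ^ 2) * x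
          - (3 * a ^ 2 * r ^ 2 - 4 * a * r) * y
          + (a ^ 2 * r ^ 2 - 2 * a * r + 1) * u - a ^ 2 * v) / 24 = 35 / 24 ∧
      a * r ^ 4 * x / 180 - a * r ^ 2 * y / 60 - a * z / 45
          + (2 * a * r ^ 2 - 3 * r) * u / 72 - a * v / 36 + a = 25 / 12)
    ↔ (y = (5 * x - 1) / 2 ∧ z = (13 * x - 7) / 2 ∧ u = 2 * x + 12 ∧
        v = (13 * x + 41) / 2) := by
  subst ha hr
  constructor
  -- The system has rank 4: the fifth equation follows from the first four, and x stays free.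
  · rintro ⟨hf₁, hf₂, hf₃, hf₄, -⟩
    exact ⟨by linarith, by linarith, by linarith, by linarith⟩
  · rintro ⟨rfl, rfl, rfl, rfl⟩
    exact ⟨by ring, by ring, by ring, by ring, by ring⟩
end
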